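/- arXiv:1201.5685 — 3 statements merged into one kernel-verified Lean document; each statement's English description precedes it below -/
import Mathlib

section
/- Fix ε : Fin n → ℝ with ε i = 1 or ε i = −1 for every i. Let f : EuclideanSpace ℝ (Fin n) → ℝ be twice continuously differentiable, let ℏ ≠ 0 and m² be real constants (m² of arbitrary sign), and suppose Δ_ε f(x) = 0 and Q_ε(f)(x) = m² for all x. Then ψ = (fun x => Complex.exp (Complex.I * f x / ℏ)) satisfies Δ_ε ψ(x) + (m²/ℏ²) * ψ(x) = 0 for all x. (Paper's Proposition 5.2 for a diagonal pseudo-Euclidean metric of arbitrary signature, where the constant kinetic energy m²/2 may be negative.) -/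
/-- The pseudo-Laplacian on `EuclideanSpace ℝ (Fin n)` for the diagonal pseudo-Euclidean
metric with signs `ε`: `Δ_ε g (x) = ∑ i, ε i • (second derivative of g along eᵢ at x)`. -/
noncomputable def pLap {n : ℕ} {V : Type*} [NormedAddCommGroup V] [NormedSpace ℝ V]
    (ε : Fin n → ℝ) (g : EuclideanSpace ℝ (Fin n) → V) (x : EuclideanSpace ℝ (Fin n)) : V :=
  ∑ i, ε i •
    fderiv ℝ (fun y => fderiv ℝ g y (EuclideanSpace.single i 1)) x (EuclideanSpace.single i 1)

/-- The squared pseudo-norm of the differential of a real function: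
`Q_ε(g)(x) = ∑ i, ε i * (∂ᵢ g (x))²`. -/
noncomputable def pQ {n : ℕ} (ε : Fin n → ℝ) (g : EuclideanSpace ℝ (Fin n) → ℝ)
    (x : EuclideanSpace ℝ (Fin n)) : ℝ :=
  ∑ i, ε i * (fderiv ℝ g x (EuclideanSpace.single i 1)) ^ 2

/-!
For real `f` and twice differentiable `φ : ℝ → V`, the second directional derivative of `φ ∘ f`
along `v` is `(∂ᵥf)² φ''(f) + ∂ᵥ∂ᵥf φ'(f)`; summing with the signs `ε` gives the chain rule
`Δ_ε (φ ∘ f) = Q_ε(f) φ''(f) + Δ_ε f φ'(f)`. For `φ(t) = exp (c t)` with `c = i/ℏ` this reads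
`Δ_ε ψ = (c² Q_ε(f) + c Δ_ε f) ψ = -(m²/ℏ²) ψ`.
-/

section ChainRule

variable {E V : Type*} [NormedAddCommGroup E] [NormedSpace ℝ E] [NormedAddCommGroup V]
  [NormedSpace ℝ V]

theorem fderiv_comp_real_apply {φ : ℝ → V} {f : E → ℝ} {y : E} (hφ : DifferentiableAt ℝ φ (f y))
    (hf : DifferentiableAt ℝ f y) (v : E) :
    fderiv ℝ (fun z => φ (f z)) y v = fderiv ℝ f y v • deriv φ (f y) := by
  rw [fderiv_fun_comp y hφ hf, ContinuousLinearMap.comp_apply, fderiv_eq_smul_deriv]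

theorem fderiv_fderiv_comp_real_apply {φ : ℝ → V} {f : E → ℝ} (hφ : Differentiable ℝ φ)
    (hφ' : Differentiable ℝ (deriv φ)) (hf : Differentiable ℝ f)
    (hf' : Differentiable ℝ (fderiv ℝ f)) (x v : E) :
    fderiv ℝ (fun y => fderiv ℝ (fun z => φ (f z)) y v) x v =
      fderiv ℝ f x v ^ 2 • deriv (deriv φ) (f x) +
        fderiv ℝ (fun y => fderiv ℝ f y v) x v • deriv φ (f x) := by
  have hfv : DifferentiableAt ℝ (fun y => fderiv ℝ f y v) x :=
    (hf' x).clm_apply (differentiableAt_const v)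
  have hφ'f : DifferentiableAt ℝ (fun y => deriv φ (f y)) x := (hφ' _).comp x (hf x)
  simp_rw [fderiv_comp_real_apply (hφ _) (hf _)]
  rw [fderiv_fun_smul hfv hφ'f, add_apply, smul_apply,
    ContinuousLinearMap.smulRight_apply, fderiv_comp_real_apply (hφ' _) (hf x), smul_smul, sq,
    add_comm]

theorem pLap_comp {n : ℕ} (ε : Fin n → ℝ) {φ : ℝ → V} {f : EuclideanSpace ℝ (Fin n) → ℝ}
    (hφ : Differentiable ℝ φ) (hφ' : Differentiable ℝ (deriv φ)) (hf : Differentiable ℝ f)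
    (hf' : Differentiable ℝ (fderiv ℝ f)) (x : EuclideanSpace ℝ (Fin n)) :
    pLap ε (fun y => φ (f y)) x = pQ ε f x • deriv (deriv φ) (f x) + pLap ε f x • deriv φ (f x) := by
  simp only [pLap, pQ, fderiv_fderiv_comp_real_apply hφ hφ' hf hf', smul_add,
    Finset.sum_add_distrib, Finset.sum_smul, smul_smul, smul_eq_mul]

end ChainRule

section ComplexExponential

theorem hasDerivAt_cexp_const_mul_ofReal (c : ℂ) (t : ℝ) :
    HasDerivAt (fun s : ℝ => Complex.exp (c * s)) (c * Complex.exp (c * t)) t := by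
  simpa [mul_comm] using ((hasDerivAt_id (t : ℂ)).const_mul c).cexp.comp_ofReal

theorem differentiable_cexp_const_mul_ofReal (c : ℂ) :
    Differentiable ℝ fun s : ℝ => Complex.exp (c * s) :=
  fun t => (hasDerivAt_cexp_const_mul_ofReal c t).differentiableAt

theorem deriv_cexp_const_mul_ofReal (c : ℂ) :
    deriv (fun s : ℝ => Complex.exp (c * s)) = fun t : ℝ => c * Complex.exp (c * t) :=
  funext fun t => (hasDerivAt_cexp_const_mul_ofReal c t).deriv

theorem differentiable_deriv_cexp_const_mul_ofReal (c : ℂ) :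
    Differentiable ℝ (deriv fun s : ℝ => Complex.exp (c * s)) := by
  rw [deriv_cexp_const_mul_ofReal]
  exact (differentiable_cexp_const_mul_ofReal c).const_mul c

theorem deriv_deriv_cexp_const_mul_ofReal (c : ℂ) :
    deriv (deriv fun s : ℝ => Complex.exp (c * s)) = fun t : ℝ => c ^ 2 * Complex.exp (c * t) := by
  funext t
  rw [deriv_cexp_const_mul_ofReal, sq, mul_assoc]
  exact ((hasDerivAt_cexp_const_mul_ofReal c t).const_mul c).deriv

end ComplexExponential

theorem kleinGordon_of_conservative_geodesic_pseudo_general {n : ℕ} (ε : Fin n → ℝ)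
    (f : EuclideanSpace ℝ (Fin n) → ℝ) (hf : ContDiff ℝ 2 f)
    (ℏ m2 : ℝ)
    (hlap : ∀ x, pLap ε f x = 0)
    (hQ : ∀ x, pQ ε f x = m2)
    (x : EuclideanSpace ℝ (Fin n)) :
    pLap ε (fun y => Complex.exp (Complex.I * (f y : ℂ) / (ℏ : ℂ))) x
      + ((m2 / ℏ ^ 2 : ℝ) : ℂ) * Complex.exp (Complex.I * (f x : ℂ) / (ℏ : ℂ)) = 0 := by
  have hψ : (fun y => Complex.exp (Complex.I * (f y : ℂ) / ℏ))
      = fun y => Complex.exp (Complex.I / ℏ * f y) := by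
    simp only [div_mul_eq_mul_div]
  rw [hψ, pLap_comp ε (differentiable_cexp_const_mul_ofReal _)
      (differentiable_deriv_cexp_const_mul_ofReal _) (hf.differentiable two_ne_zero)
      ((hf.fderiv_right le_rfl).differentiable one_ne_zero),
    deriv_deriv_cexp_const_mul_ofReal, deriv_cexp_const_mul_ofReal, hlap, hQ]
  simp only [Complex.real_smul, zero_smul, add_zero, Complex.ofReal_div, Complex.ofReal_pow,
    div_mul_eq_mul_div]
  linear_combination (m2 / ℏ ^ 2 * Complex.exp (Complex.I * f x / ℏ)) * Complex.I_sq

/-- Proposition 5.2 for a diagonal pseudo-Euclidean metric of arbitrary signature: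
if `Δ_ε f = 0` and `Q_ε(f) = m²` (with `m²` of arbitrary sign), then `ψ = e^{i f/ℏ}`
satisfies `Δ_ε ψ + (m²/ℏ²) ψ = 0`. -/
theorem kleinGordon_of_conservative_geodesic_pseudo {n : ℕ} (ε : Fin n → ℝ)
    (hε : ∀ i, ε i = 1 ∨ ε i = -1)
    (f : EuclideanSpace ℝ (Fin n) → ℝ) (hf : ContDiff ℝ 2 f)
    (ℏ m2 : ℝ) (hℏ : ℏ ≠ 0)
    (hlap : ∀ x, pLap ε f x = 0)
    (hQ : ∀ x, pQ ε f x = m2)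
    (x : EuclideanSpace ℝ (Fin n)) :
    pLap ε (fun y => Complex.exp (Complex.I * (f y : ℂ) / (ℏ : ℂ))) x
      + ((m2 / ℏ ^ 2 : ℝ) : ℂ) * Complex.exp (Complex.I * (f x : ℂ) / (ℏ : ℂ)) = 0 :=
  kleinGordon_of_conservative_geodesic_pseudo_general ε f hf ℏ m2 hlap hQ x
end

section
/- Let E = EuclideanSpace ℝ (Fin n), let A : E → E be continuous, f : E → ℝ twice continuously differentiable, ℏ ≠ 0 and m² real constants, and suppose ψ = (fun x => Complex.exp (Complex.I * f x / ℏ)) satisfies Δψ(x) − (2·Complex.I/ℏ) * (fderiv ℝ ψ x (A x)) + (1/ℏ²) * (m² − ‖A(x)‖²) * ψ(x) = 0 for all x. Then Δf(x) = 0 and ‖∇f(x) − A(x)‖² = m² for all x. (Converse remark at the end of Section 6: for real f, the Klein–Gordon equation forces the vector field u = ∇f − A to be divergence-free and of constant squared length m².) -/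
/-!
Write `ψ = exp (c f)` with `c = i/ℏ`. The chain and product rules give
`Δψ = ψ (c Δf + c² ‖∇f‖²)` and `Dψ(A) = ψ c ⟪∇f, A⟫`, so after dividing by `ψ/ℏ²` the
equation becomes `iℏ Δf + (m² - ‖∇f‖² + 2⟪∇f, A⟫ - ‖A‖²) = 0`. Its imaginary part is
`Δf = 0` and its real part is `‖∇f - A‖² = m²`.
-/

/-- The Laplacian of a function on `EuclideanSpace ℝ (Fin n)` with values in a real
normed space: the sum of the second derivatives along the standard orthonormal basis. -/
noncomputable def eLap {n : ℕ} {V : Type*} [NormedAddCommGroup V] [NormedSpace ℝ V]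
    (g : EuclideanSpace ℝ (Fin n) → V) (x : EuclideanSpace ℝ (Fin n)) : V :=
  ∑ i, fderiv ℝ (fun y => fderiv ℝ g y (EuclideanSpace.single i 1)) x (EuclideanSpace.single i 1)

open Complex

section Phase

variable {E : Type*} [NormedAddCommGroup E] [NormedSpace ℝ E] {f : E → ℝ} {c : ℂ} {x : E}

theorem hasFDerivAt_cexp_const_mul_ofReal (hf : DifferentiableAt ℝ f x) :
    HasFDerivAt (fun y => cexp (c * f y))
      ((cexp (c * f x) * c) • ofRealCLM.comp (fderiv ℝ f x)) x := by
  have h := ((ofRealCLM.hasFDerivAt.comp x hf.hasFDerivAt).const_mul c).cexp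
  rwa [smul_smul] at h

theorem fderiv_cexp_const_mul_ofReal_apply (hf : DifferentiableAt ℝ f x) (v : E) :
    fderiv ℝ (fun y => cexp (c * f y)) x v = cexp (c * f x) * c * fderiv ℝ f x v := by
  simp [(hasFDerivAt_cexp_const_mul_ofReal hf).fderiv]

theorem fderiv_fderiv_cexp_const_mul_ofReal_apply (hf : Differentiable ℝ f) {v : E}
    (hfv : DifferentiableAt ℝ (fun y => fderiv ℝ f y v) x) (w : E) :
    fderiv ℝ (fun y => fderiv ℝ (fun y => cexp (c * f y)) y v) x w =
      cexp (c * f x) * (c * fderiv ℝ (fun y => fderiv ℝ f y v) x w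
        + c ^ 2 * (fderiv ℝ f x w * fderiv ℝ f x v)) := by
  have hψv : (fun y => fderiv ℝ (fun y => cexp (c * f y)) y v) =
      fun y => cexp (c * f y) * c * (fderiv ℝ f y v : ℂ) :=
    funext fun y => fderiv_cexp_const_mul_ofReal_apply (hf y) v
  have hprod : HasFDerivAt (fun y => cexp (c * f y) * c * (fderiv ℝ f y v : ℂ)) _ x :=
    ((hasFDerivAt_cexp_const_mul_ofReal (hf x)).mul_const c).mul
      (ofRealCLM.hasFDerivAt.comp x hfv.hasFDerivAt)
  rw [hψv, hprod.fderiv]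
  simp only [add_apply, smul_apply, ContinuousLinearMap.comp_apply, ofRealCLM_apply, smul_eq_mul]
  ring

end Phase

section Euclidean

variable {n : ℕ}

theorem sum_sq_fderiv_single_eq_norm_gradient_sq (f : EuclideanSpace ℝ (Fin n) → ℝ)
    (x : EuclideanSpace ℝ (Fin n)) :
    ∑ i, fderiv ℝ f x (EuclideanSpace.single i 1) ^ 2 = ‖gradient f x‖ ^ 2 := by
  simp [← inner_gradient_left, EuclideanSpace.inner_single_right,
    EuclideanSpace.real_norm_sq_eq]

theorem eLap_cexp_const_mul_ofReal {f : EuclideanSpace ℝ (Fin n) → ℝ} (hf : ContDiff ℝ 2 f)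
    (c : ℂ) (x : EuclideanSpace ℝ (Fin n)) :
    eLap (fun y => cexp (c * f y)) x =
      cexp (c * f x) * (c * eLap f x + c ^ 2 * ((‖gradient f x‖ ^ 2 : ℝ) : ℂ)) := by
  have hfv (v : EuclideanSpace ℝ (Fin n)) : Differentiable ℝ (fun y => fderiv ℝ f y v) :=
    ((hf.fderiv_right one_add_one_eq_two.le).differentiable one_ne_zero).clm_apply
      (differentiable_const v)
  simp only [eLap, fderiv_fderiv_cexp_const_mul_ofReal_apply (hf.differentiable two_ne_zero)
    (hfv _ x), Finset.sum_add_distrib, ← Finset.mul_sum]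
  rw [← sum_sq_fderiv_single_eq_norm_gradient_sq]
  push_cast [sq]
  rfl

end Euclidean

theorem eq_zero_and_eikonal_of_kleinGordon_phase {ℏ m2 L S P a : ℝ} {ψ : ℂ}
    (hℏ : ℏ ≠ 0) (hψ : ψ ≠ 0)
    (h : ψ * (I / ℏ * L + (I / ℏ) ^ 2 * S) - 2 * I / ℏ * (ψ * (I / ℏ) * P)
      + 1 / ℏ ^ 2 * (m2 - a) * ψ = 0) :
    L = 0 ∧ S - 2 * P + a = m2 := by
  have hscaled : ψ / ℏ ^ 2 * (⟨m2 - a - S + 2 * P, ℏ * L⟩ : ℂ) = 0 := by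
    have hℏc : (ℏ : ℂ) ≠ 0 := ofReal_ne_zero.mpr hℏ
    rw [mk_eq_add_mul_I]
    field_simp at h ⊢
    push_cast
    linear_combination h + ψ * (2 * P - S) * I_sq
  obtain ⟨hre : m2 - a - S + 2 * P = 0, him : ℏ * L = 0⟩ :=
    Complex.ext_iff.mp ((mul_eq_zero.mp hscaled).resolve_left (by simp [hψ, hℏ]))
  exact ⟨(mul_eq_zero.mp him).resolve_left hℏ, by linarith⟩

theorem kleinGordon_converse_general {n : ℕ}
    (A : EuclideanSpace ℝ (Fin n) → EuclideanSpace ℝ (Fin n))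
    (f : EuclideanSpace ℝ (Fin n) → ℝ) (hf : ContDiff ℝ 2 f)
    (ℏ m2 : ℝ) (hℏ : ℏ ≠ 0)
    (hKG : ∀ x,
      eLap (fun y => Complex.exp (Complex.I * (f y : ℂ) / (ℏ : ℂ))) x
        - (2 * Complex.I / (ℏ : ℂ)) *
            (fderiv ℝ (fun y => Complex.exp (Complex.I * (f y : ℂ) / (ℏ : ℂ))) x (A x))
        + (1 / (ℏ : ℂ) ^ 2) * ((m2 : ℂ) - ((‖A x‖ ^ 2 : ℝ) : ℂ)) *
            Complex.exp (Complex.I * (f x : ℂ) / (ℏ : ℂ)) = 0) :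
    ∀ x, eLap f x = 0 ∧ ‖gradient f x - A x‖ ^ 2 = m2 := by
  intro x
  simp only [mul_div_right_comm I] at hKG
  have hKGx := hKG x
  rw [eLap_cexp_const_mul_ofReal hf, fderiv_cexp_const_mul_ofReal_apply
    (hf.differentiable two_ne_zero x), ← inner_gradient_left] at hKGx
  obtain ⟨hLap, hnorm⟩ := eq_zero_and_eikonal_of_kleinGordon_phase hℏ (exp_ne_zero _) hKGx
  exact ⟨hLap, by rwa [norm_sub_sq_real]⟩

/-- Converse remark at the end of Section 6: if `ψ = e^{i f/ℏ}` (with `f` real and C²)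
satisfies the coupled Klein-Gordon equation for a continuous potential `A`, then `Δf = 0`
and `‖∇f - A‖² = m²`. -/
theorem kleinGordon_converse {n : ℕ}
    (A : EuclideanSpace ℝ (Fin n) → EuclideanSpace ℝ (Fin n)) (hA : Continuous A)
    (f : EuclideanSpace ℝ (Fin n) → ℝ) (hf : ContDiff ℝ 2 f)
    (ℏ m2 : ℝ) (hℏ : ℏ ≠ 0)
    (hKG : ∀ x,
      eLap (fun y => Complex.exp (Complex.I * (f y : ℂ) / (ℏ : ℂ))) x
        - (2 * Complex.I / (ℏ : ℂ)) *
            (fderiv ℝ (fun y => Complex.exp (Complex.I * (f y : ℂ) / (ℏ : ℂ))) x (A x))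
        + (1 / (ℏ : ℂ) ^ 2) * ((m2 : ℂ) - ((‖A x‖ ^ 2 : ℝ) : ℂ)) *
            Complex.exp (Complex.I * (f x : ℂ) / (ℏ : ℂ)) = 0) :
    ∀ x, eLap f x = 0 ∧ ‖gradient f x - A x‖ ^ 2 = m2 :=
  kleinGordon_converse_general A f hf ℏ m2 hℏ hKG
end

section
/- Let E = EuclideanSpace ℝ (Fin n) and let f : E → ℝ be twice continuously differentiable such that the gradient field u = ∇f is geodesic, i.e. (fderiv ℝ (fun x => ∇f(x)) x) (∇f(x)) = 0 for all x. Then there exists a real constant c such that ‖∇f(x)‖² = c for all x. (Lagrangian solutions of the free Newton equation, Section 5: geodesic gradient fields have constant kinetic energy.) -/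
open InnerProductSpace
open scoped RealInnerProductSpace Gradient

section GradientHessian

variable {E : Type*} [NormedAddCommGroup E] [InnerProductSpace ℝ E] [CompleteSpace E]
  {f : E → ℝ} {x : E}

theorem hasFDerivAt_gradient (hf : DifferentiableAt ℝ (fderiv ℝ f) x) :
    HasFDerivAt (∇ f)
      ((toDual ℝ E).symm.toContinuousLinearEquiv.toContinuousLinearMap.comp
        (fderiv ℝ (fderiv ℝ f) x)) x :=
  (toDual ℝ E).symm.toContinuousLinearEquiv.toContinuousLinearMap.hasFDerivAt.comp x
    hf.hasFDerivAt

theorem inner_fderiv_gradient_apply (hf : DifferentiableAt ℝ (fderiv ℝ f) x) (v w : E) :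
    ⟪fderiv ℝ (∇ f) x v, w⟫ = fderiv ℝ (fderiv ℝ f) x v w := by
  rw [(hasFDerivAt_gradient hf).fderiv, ← (toDual ℝ E).apply_symm_apply (fderiv ℝ (fderiv ℝ f) x v), toDual_apply_apply]
  rfl

theorem isSymmetric_fderiv_gradient (hf : ContDiffAt ℝ 2 f x) :
    (fderiv ℝ (∇ f) x : E →ₗ[ℝ] E).IsSymmetric := by
  have hdf : DifferentiableAt ℝ (fderiv ℝ f) x :=
    (hf.fderiv_right le_rfl).differentiableAt one_ne_zero
  intro v w
  rw [ContinuousLinearMap.coe_coe, real_inner_comm _ v, inner_fderiv_gradient_apply hdf,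
    inner_fderiv_gradient_apply hdf, hf.isSymmSndFDerivAt (by simp)]

end GradientHessian

theorem norm_sq_eq_of_fderiv_apply_self_eq_zero {E : Type*} [NormedAddCommGroup E]
    [InnerProductSpace ℝ E] {u : E → E} (hu : Differentiable ℝ u)
    (hsymm : ∀ x, (fderiv ℝ u x : E →ₗ[ℝ] E).IsSymmetric)
    (hgeo : ∀ x, fderiv ℝ u x (u x) = 0) (x y : E) :
    ‖u x‖ ^ 2 = ‖u y‖ ^ 2 := by
  -- `d‖u‖² = 2 ⟪u, Du ·⟫ = 2 ⟪Du u, ·⟫` by symmetry of `Du`, and `Du u = 0`.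
  have hzero : ∀ z, HasFDerivAt (‖u ·‖ ^ 2) (0 : E →L[ℝ] ℝ) z := by
    intro z
    convert (hu z).hasFDerivAt.norm_sq using 1
    ext v
    have := hsymm z (u z) v
    simp only [ContinuousLinearMap.coe_coe, hgeo z, inner_zero_left] at this
    simp [← this]
  exact is_const_of_fderiv_eq_zero (fun z => (hzero z).differentiableAt)
    (fun z => (hzero z).fderiv) x y

/-- Section 5: a geodesic gradient field `u = ∇f` (i.e. `(∇f · ∇)∇f = 0`) has constant
kinetic energy: `‖∇f‖²` is constant. -/
theorem geodesic_gradient_constant_kinetic_energy {n : ℕ}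
    (f : EuclideanSpace ℝ (Fin n) → ℝ) (hf : ContDiff ℝ 2 f)
    (hgeo : ∀ x, (fderiv ℝ (fun y => gradient f y) x) (gradient f x) = 0) :
    ∃ c : ℝ, ∀ x, ‖gradient f x‖ ^ 2 = c := by
  have hdf : Differentiable ℝ (fderiv ℝ f) :=
    (hf.fderiv_right le_rfl).differentiable one_ne_zero
  have hu : Differentiable ℝ (∇ f) := fun x => (hasFDerivAt_gradient (hdf x)).differentiableAt
  exact ⟨_, fun x => norm_sq_eq_of_fderiv_apply_self_eq_zero hu
    (fun x => isSymmetric_fderiv_gradient hf.contDiffAt) hgeo x 0⟩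
end
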